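/- arXiv:1003.0305 — 6 statements merged into one kernel-verified Lean document; each statement's English description precedes it below -/
import Mathlib

section
/- Let S be an asymptotically compact semiflow on a complete metric space X. Let x_n be a bounded sequence in X such that S(t)x_n is contained in a fixed bounded subset B of X for all t ≥ 0 and all n ≥ 1, and let τ_n → +∞. Define γ_n(t) = S(τ_n + t)x_n for t ∈ (−τ_n, +∞). Then there is a subsequence of (γ_n) that converges, uniformly on every compact interval of ℝ, to a complete trajectory γ of S. -/
open Metric Set Filter Topology Bornology

/-- A semiflow on a metric space `X`: a map `S : [0,∞) × X → X`, continuous on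
`[0,∞) × X`, with `S 0 x = x` and `S (t+s) x = S t (S s x)` for `t, s ≥ 0`. -/
structure Semiflow (X : Type*) [MetricSpace X] where
  toFun : ℝ → X → X
  continuousOn : ContinuousOn (fun p : ℝ × X => toFun p.1 p.2) (Set.Ici (0:ℝ) ×ˢ Set.univ)
  map_zero : ∀ x, toFun 0 x = x
  map_add : ∀ (t s : ℝ), 0 ≤ t → 0 ≤ s → ∀ x, toFun (t + s) x = toFun t (toFun s x)

namespace Semiflow

variable {X : Type*} [MetricSpace X] (φ : Semiflow X)

/-- Asymptotic compactness: every bounded sequence `x n`, with times `t n → ∞`,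
such that `S (t n) (x n)` is bounded, has a convergent subsequence of images. -/
def AsympCompact : Prop :=
  ∀ (x : ℕ → X) (t : ℕ → ℝ), (∀ n, 0 ≤ t n) →
    IsBounded (Set.range x) → Tendsto t atTop atTop →
    IsBounded (Set.range fun n => φ.toFun (t n) (x n)) →
    ∃ (y : X) (k : ℕ → ℕ), StrictMono k ∧
      Tendsto (fun n => φ.toFun (t (k n)) (x (k n))) atTop (𝓝 y)

/-- `M` attracts `B`: for every `ε > 0` there is `T > 0` with
`S t B ⊆ B(M,ε)` for all `t > T`. -/
def Attracts (M B : Set X) : Prop :=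
  ∀ ε > (0:ℝ), ∃ T > (0:ℝ), ∀ t > T, ∀ x ∈ B, infDist (φ.toFun t x) M < ε

/-- `M` is invariant: `S t M = M` for all `t ≥ 0`. -/
def Invariant (M : Set X) : Prop :=
  ∀ t ≥ (0:ℝ), φ.toFun t '' M = M

/-- An attractor: a compact invariant set attracting a neighborhood of itself. -/
def IsAttractor (A : Set X) : Prop :=
  IsCompact A ∧ φ.Invariant A ∧ ∃ U : Set X, A ⊆ interior U ∧ φ.Attracts A U

/-- The attraction basin of `A`: points whose orbits converge to `A`. -/
def basin (A : Set X) : Set X :=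
  {x | Tendsto (fun t : ℝ => infDist (φ.toFun t x) A) atTop (𝓝 0)}

/-- The ω-limit set of a set `A`. -/
def omegaLimit (A : Set X) : Set X :=
  {y | ∃ (x : ℕ → X) (t : ℕ → ℝ), (∀ n, x n ∈ A) ∧ (∀ n, 0 ≤ t n) ∧
    Tendsto t atTop atTop ∧ Tendsto (fun n => φ.toFun (t n) (x n)) atTop (𝓝 y)}

/-- A complete trajectory of the semiflow. -/
def IsCompleteTraj (γ : ℝ → X) : Prop :=
  ∀ s t : ℝ, s ≤ t → γ t = φ.toFun (t - s) (γ s)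

/-- ω-limit set of a complete trajectory. -/
def trajOmega (γ : ℝ → X) : Set X :=
  {y | ∃ t : ℕ → ℝ, Tendsto t atTop atTop ∧ Tendsto (fun n => γ (t n)) atTop (𝓝 y)}

/-- α-limit set of a complete trajectory. -/
def trajAlpha (γ : ℝ → X) : Set X :=
  {y | ∃ t : ℕ → ℝ, Tendsto t atTop atBot ∧ Tendsto (fun n => γ (t n)) atTop (𝓝 y)}

/-- The dual repeller of `A` inside `𝒜`. -/
def dualRepeller (𝒜 A : Set X) : Set X :=
  {x ∈ 𝒜 | φ.omegaLimit {x} ∩ A = ∅}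

/-- `A` is an attractor of the restricted semiflow on the invariant set `𝒜`:
`A ⊆ 𝒜` is compact, invariant, and attracts a relative neighborhood of itself in `𝒜`. -/
def IsAttractorIn (𝒜 A : Set X) : Prop :=
  A ⊆ 𝒜 ∧ IsCompact A ∧ φ.Invariant A ∧
    ∃ V : Set X, IsOpen V ∧ A ⊆ V ∧ φ.Attracts A (𝒜 ∩ V)

/-- `M 1, …, M l` is a Morse decomposition of `𝒜` with Morse filtration
`∅ = A 0 ⊊ A 1 ⊊ ⋯ ⊊ A l = 𝒜`. -/
def IsMorseDecompositionWithFiltration (𝒜 : Set X) (l : ℕ) (M A : ℕ → Set X) : Prop :=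
  A 0 = (∅ : Set X) ∧ A l = 𝒜 ∧
  (∀ k, 1 ≤ k → k ≤ l → φ.IsAttractorIn 𝒜 (A k)) ∧
  (∀ k, 1 ≤ k → k ≤ l → A (k - 1) ⊂ A k) ∧
  (∀ k, 1 ≤ k → k ≤ l → M k = A k ∩ φ.dualRepeller 𝒜 (A (k - 1)))

/-- `M 1, …, M l` is a Morse decomposition of `𝒜`. -/
def IsMorseDecomposition (𝒜 : Set X) (l : ℕ) (M : ℕ → Set X) : Prop :=
  ∃ A : ℕ → Set X, φ.IsMorseDecompositionWithFiltration 𝒜 l M A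

/-- The Dini derivative of `V` along the semiflow. -/
noncomputable def dini (V : X → ℝ) (x : X) : ℝ :=
  Filter.limsup (fun t : ℝ => (V (φ.toFun t x) - V x) / t) (𝓝[>] (0:ℝ))

end Semiflow

/-- `A ⊂⊂ B`: the closure of `A` is contained in the interior of `B` and
`dist (A, ∂B) > 0`. -/
def WayInside {X : Type*} [MetricSpace X] (A B : Set X) : Prop :=
  closure A ⊆ interior B ∧ ∃ δ > (0:ℝ), ∀ x ∈ A, ∀ y ∈ frontier B, δ ≤ dist x y

/-- `V` is radially unbounded on the open set `Ω`. -/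
def RadiallyUnbounded {X : Type*} [MetricSpace X] (V : X → ℝ) (Ω : Set X) : Prop :=
  ∀ R > (0:ℝ), ∃ B : Set X, IsBounded B ∧ IsClosed B ∧ B ⊆ Ω ∧ WayInside B Ω ∧
    ∀ x ∈ Ω \ B, R < V x

/-- `F` is a strong deformation retract of `E`. -/
def IsStrongDeformationRetract {X : Type*} [MetricSpace X] (F E : Set X) : Prop :=
  F ⊆ E ∧ ∃ H : ℝ × X → X, ContinuousOn H (Set.Icc (0:ℝ) 1 ×ˢ E) ∧
    (∀ x ∈ E, H (0, x) = x) ∧ (∀ x ∈ E, H (1, x) ∈ F) ∧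
    (∀ σ ∈ Set.Icc (0:ℝ) 1, ∀ x ∈ F, H (σ, x) = x) ∧
    (∀ σ ∈ Set.Icc (0:ℝ) 1, ∀ x ∈ E, H (σ, x) ∈ E)

namespace Semiflow

variable {X : Type*} [MetricSpace X] (φ : Semiflow X)

/-- A Morse–Lyapunov function of the Morse decomposition `M` on `Ω`. -/
def IsMorseLyapunov (Ω : Set X) (l : ℕ) (M : ℕ → Set X) (V : X → ℝ) : Prop :=
  ContinuousOn V Ω ∧
  (∀ k, 1 ≤ k → k ≤ l → ∃ c : ℝ, ∀ x ∈ M k, V x = c) ∧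
  (∀ x ∈ Ω \ ⋃ k ∈ Set.Icc 1 l, M k,
    StrictAntiOn (fun t : ℝ => V (φ.toFun t x)) (Set.Ici (0:ℝ)))

/-- A strict Morse–Lyapunov function: the values on the Morse sets are increasing. -/
def IsStrictMorseLyapunov (Ω : Set X) (l : ℕ) (M : ℕ → Set X) (V : X → ℝ) : Prop :=
  φ.IsMorseLyapunov Ω l M V ∧ ∃ c : ℕ → ℝ,
    (∀ k, 1 ≤ k → k ≤ l → ∀ x ∈ M k, V x = c k) ∧
    (∀ j k, 1 ≤ j → j < k → k ≤ l → c j < c k)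

end Semiflow

/-!
Asymptotic compactness, applied along any subsequence, makes every sequence of "backward
snapshots" `S(τ n - m) (x n)` (fixed `m : ℕ`) subconverge; a diagonal subsequence makes all of
them converge, say to `y m`. Passing to the limit in
`S p (S(τ n - (m + p)) (x n)) = S(τ n - m) (x n)` shows that `(y m)` is a backward orbit sampled
at integer times, which extends to a complete trajectory `γ` with `γ (-m) = y m`. On `[a, b]`
with `m ≥ -a` we have `S(τ n + t) (x n) = S(t + m) (S(τ n - m) (x n))`, and `S(s) z → S(s) (y m)`
uniformly for `s` in a compact interval as `z → y m`, by the tube lemma.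
-/

theorem exists_strictMono_forall_tendsto {X : Type*} [TopologicalSpace X] {u : ℕ → ℕ → X}
    (h : ∀ m (j : ℕ → ℕ), StrictMono j →
      ∃ y, ∃ k : ℕ → ℕ, StrictMono k ∧ Tendsto (fun n => u m (j (k n))) atTop (𝓝 y)) :
    ∃ d : ℕ → ℕ, StrictMono d ∧ ∃ y : ℕ → X, ∀ m, Tendsto (fun n => u m (d n)) atTop (𝓝 (y m)) := by
  have : Nonempty X := let ⟨y, _⟩ := h 0 id strictMono_id; ⟨y⟩
  choose! y k hk hy using h
  -- `J (m + 1)` is a subsequence of `J m` along which `u m` converges.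
  let J : ℕ → ℕ → ℕ := fun m => Nat.rec (motive := fun _ => ℕ → ℕ) id (fun m J => J ∘ k m J) m
  have hJ : ∀ m, StrictMono (J m) := by
    intro m
    induction m with
    | zero => exact strictMono_id
    | succ m ih => exact ih.comp (hk m _ ih)
  have hJ_add : ∀ m p n, ∃ i, n ≤ i ∧ J (m + p) n = J m i := by
    intro m p
    induction p with
    | zero => exact fun n => ⟨n, le_rfl, rfl⟩
    | succ p ih =>
      intro n
      obtain ⟨i, hi, hJi⟩ := ih (k (m + p) (J (m + p)) n)
      exact ⟨i, (hk _ _ (hJ _)).le_apply.trans hi, hJi⟩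
  refine ⟨fun n => J n n, strictMono_nat_of_lt_succ fun n => ?_, fun m => y m (J m), fun m => ?_⟩
  · exact hJ n ((Nat.lt_succ_self n).trans_le (hk n _ (hJ n)).le_apply)
  · have hdiag : ∀ n, m + 1 ≤ n → ∃ i, n ≤ i ∧ J n n = J (m + 1) i := fun n hn => by
      obtain ⟨p, rfl⟩ := Nat.exists_eq_add_of_le hn
      exact hJ_add (m + 1) p _
    choose! i hi using hdiag
    have hi_top : Tendsto i atTop atTop :=
      tendsto_atTop_mono' _ ((eventually_ge_atTop (m + 1)).mono fun n hn => (hi n hn).1) tendsto_id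
    refine ((hy m (J m) (hJ m)).comp hi_top).congr' ?_
    filter_upwards [eventually_ge_atTop (m + 1)] with n hn
    exact congrArg (u m) (hi n hn).2.symm

namespace Semiflow

variable {X : Type*} [MetricSpace X] (φ : Semiflow X)

theorem continuous_toFun {t : ℝ} (ht : 0 ≤ t) : Continuous (φ.toFun t) :=
  φ.continuousOn.comp_continuous (Continuous.prodMk_right t) fun z => ⟨ht, mem_univ z⟩

theorem tendstoUniformlyOn_of_tendsto {ι : Type*} {l : Filter ι} {z : ι → X} {y : X}
    (hz : Tendsto z l (𝓝 y)) {K : Set ℝ} (hK : IsCompact K) (hK0 : K ⊆ Ici 0) :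
    TendstoUniformlyOn (fun i s => φ.toFun s (z i)) (fun s => φ.toFun s y) l K := by
  intro u hu
  have hcont : ContinuousOn (fun (p : X) (s : ℝ) => φ.toFun s p).uncurry (univ ×ˢ K) :=
    φ.continuousOn.comp continuous_swap.continuousOn fun p hp => ⟨hK0 hp.2, mem_univ _⟩
  obtain ⟨v, hv, hvu⟩ :=
    hK.mem_uniformity_of_prod hcont (mem_univ y) (tendsto_swap_uniformity hu)
  rw [nhdsWithin_univ] at hv
  filter_upwards [hz hv] with i hi s hs using hvu _ hi s hs

namespace AsympCompact

variable {φ}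

theorem exists_tendsto_subseq (hac : φ.AsympCompact) {x : ℕ → X}
    (hx : IsBounded (range x)) {t : ℕ → ℝ} (ht : Tendsto t atTop atTop) {B : Set X}
    (hB : IsBounded B) (hxB : ∀ᶠ n in atTop, φ.toFun (t n) (x n) ∈ B) :
    ∃ y, ∃ k : ℕ → ℕ, StrictMono k ∧
      Tendsto (fun n => φ.toFun (t (k n)) (x (k n))) atTop (𝓝 y) := by
  have ht_eq : ∀ᶠ n in atTop, max (t n) 0 = t n :=
    (ht.eventually_ge_atTop 0).mono fun n hn => max_eq_left hn
  obtain ⟨N, hN⟩ := eventually_atTop.1 (ht_eq.and hxB)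
  set z : ℕ → X := fun n => φ.toFun (max (t n) 0) (x n)
  have hbdd : IsBounded (range z) := by
    refine (hB.union ((finite_Iio N).image z).isBounded).subset ?_
    rintro _ ⟨n, rfl⟩
    rcases lt_or_ge n N with hn | hn
    · exact Or.inr ⟨n, hn, rfl⟩
    · exact Or.inl (by simpa only [z, (hN n hn).1] using (hN n hn).2)
  obtain ⟨y, k, hk, hy⟩ := hac x (fun n => max (t n) 0) (fun n => le_max_right _ _) hx
    (tendsto_atTop_mono (fun n => le_max_left _ _) ht) hbdd
  refine ⟨y, k, hk, hy.congr' ?_⟩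
  filter_upwards [hk.tendsto_atTop.eventually ht_eq] with n hn
  rw [hn]

end AsympCompact

/-- `y m` plays the role of the state at time `-m`. -/
def IsBackwardOrbit (y : ℕ → X) : Prop :=
  ∀ m p : ℕ, φ.toFun p (y (m + p)) = y m

noncomputable def backwardTraj (y : ℕ → X) (t : ℝ) : X :=
  φ.toFun (t + ⌈-t⌉₊) (y ⌈-t⌉₊)

theorem isBackwardOrbit_of_tendsto {x : ℕ → X} {τ : ℕ → ℝ} (hτ : Tendsto τ atTop atTop)
    {y : ℕ → X} (hy : ∀ m : ℕ, Tendsto (fun n => φ.toFun (τ n - m) (x n)) atTop (𝓝 (y m))) :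
    φ.IsBackwardOrbit y := by
  intro m p
  refine tendsto_nhds_unique (((φ.continuous_toFun p.cast_nonneg).tendsto _).comp (hy (m + p)))
    ((hy m).congr' ?_)
  filter_upwards [hτ.eventually_ge_atTop ((m + p : ℕ) : ℝ)] with n hn
  rw [Function.comp_apply, ← φ.map_add _ _ p.cast_nonneg (sub_nonneg.2 hn)]
  congr 1
  push_cast
  ring

namespace IsBackwardOrbit

variable {φ} {y : ℕ → X}

theorem backwardTraj_eq (hy : φ.IsBackwardOrbit y) {t : ℝ} {m : ℕ} (hm : -t ≤ m) :
    φ.backwardTraj y t = φ.toFun (t + m) (y m) := by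
  obtain ⟨p, rfl⟩ := Nat.exists_eq_add_of_le (Nat.ceil_le.2 hm)
  have hceil : -t ≤ (⌈-t⌉₊ : ℝ) := Nat.le_ceil _
  rw [backwardTraj, ← hy ⌈-t⌉₊ p, ← φ.map_add _ _ (by linarith) p.cast_nonneg]
  congr 1
  push_cast
  ring

theorem isCompleteTraj_backwardTraj (hy : φ.IsBackwardOrbit y) :
    φ.IsCompleteTraj (φ.backwardTraj y) := by
  intro s t hst
  have hceil : -s ≤ (⌈-s⌉₊ : ℝ) := Nat.le_ceil _
  rw [hy.backwardTraj_eq (by linarith), hy.backwardTraj_eq hceil,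
    ← φ.map_add (t - s) (s + ⌈-s⌉₊) (by linarith) (by linarith)]
  congr 1
  ring

end IsBackwardOrbit

theorem tendstoUniformlyOn_backwardTraj {x : ℕ → X} {τ : ℕ → ℝ} (hτ : Tendsto τ atTop atTop)
    {y : ℕ → X} (hy : ∀ m : ℕ, Tendsto (fun n => φ.toFun (τ n - m) (x n)) atTop (𝓝 (y m)))
    (a b : ℝ) :
    TendstoUniformlyOn (fun n t => φ.toFun (τ n + t) (x n)) (φ.backwardTraj y) atTop (Icc a b) := by
  set m := ⌈-a⌉₊
  have hm : -a ≤ m := Nat.le_ceil _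
  have hunif := (φ.tendstoUniformlyOn_of_tendsto (hy m) (isCompact_Icc (a := a + m) (b := b + m))
    fun s hs => by simp only [mem_Ici]; linarith [hs.1]).comp (· + (m : ℝ))
  rw [preimage_add_const_Icc, add_sub_cancel_right, add_sub_cancel_right] at hunif
  refine (hunif.congr ?_).congr_right fun t ht => ?_
  · filter_upwards [hτ.eventually_ge_atTop (m : ℝ)] with n hn t ht
    simp only [Function.comp_apply]
    rw [← φ.map_add _ _ (by linarith [ht.1]) (sub_nonneg.2 hn)]
    congr 1
    ring
  · exact ((φ.isBackwardOrbit_of_tendsto hτ hy).backwardTraj_eq (by linarith [ht.1])).symm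

end Semiflow

theorem stmt0_general {X : Type*} [MetricSpace X] (φ : Semiflow X)
    (hac : φ.AsympCompact)
    (x : ℕ → X) (hx : Bornology.IsBounded (Set.range x))
    (B : Set X) (hB : Bornology.IsBounded B)
    (horb : ∀ t : ℝ, 0 ≤ t → ∀ n : ℕ, 1 ≤ n → φ.toFun t (x n) ∈ B)
    (τ : ℕ → ℝ) (hτ : Filter.Tendsto τ Filter.atTop Filter.atTop) :
    ∃ k : ℕ → ℕ, StrictMono k ∧ ∃ γ : ℝ → X, φ.IsCompleteTraj γ ∧
      ∀ a b : ℝ, a ≤ b →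
        TendstoUniformlyOn (fun n t => φ.toFun (τ (k n) + t) (x (k n))) γ
          Filter.atTop (Set.Icc a b) := by
  obtain ⟨d, hd, y, hy⟩ := exists_strictMono_forall_tendsto
    (u := fun m n => φ.toFun (τ n - m) (x n)) fun m j hj => by
      have hτj := hτ.comp hj.tendsto_atTop
      refine hac.exists_tendsto_subseq (hx.subset (range_comp_subset_range j x))
        (by simpa only [sub_eq_add_neg] using tendsto_atTop_add_const_right _ (-(m : ℝ)) hτj) hB ?_
      filter_upwards [hτj.eventually_ge_atTop (m : ℝ), hj.tendsto_atTop.eventually_ge_atTop 1]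
        with n hτn hjn
      exact horb _ (sub_nonneg.2 hτn) _ hjn
  have hτd := hτ.comp hd.tendsto_atTop
  exact ⟨d, hd, φ.backwardTraj y, (φ.isBackwardOrbit_of_tendsto hτd hy).isCompleteTraj_backwardTraj,
    fun a b _ => φ.tendstoUniformlyOn_backwardTraj hτd hy a b⟩

/-- If `x n` is a bounded sequence whose orbits stay in a fixed bounded set `B`,
and `τ n → +∞`, then a subsequence of `γ_n(t) = S (τ n + t) (x n)` converges, uniformly on
every compact interval, to a complete trajectory of the semiflow. -/
theorem stmt0 {X : Type*} [MetricSpace X] [CompleteSpace X] (φ : Semiflow X)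
    (hac : φ.AsympCompact)
    (x : ℕ → X) (hx : Bornology.IsBounded (Set.range x))
    (B : Set X) (hB : Bornology.IsBounded B)
    (horb : ∀ t : ℝ, 0 ≤ t → ∀ n : ℕ, 1 ≤ n → φ.toFun t (x n) ∈ B)
    (τ : ℕ → ℝ) (hτ : Filter.Tendsto τ Filter.atTop Filter.atTop) :
    ∃ k : ℕ → ℕ, StrictMono k ∧ ∃ γ : ℝ → X, φ.IsCompleteTraj γ ∧
      ∀ a b : ℝ, a ≤ b →
        TendstoUniformlyOn (fun n t => φ.toFun (τ (k n) + t) (x (k n))) γ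
          Filter.atTop (Set.Icc a b) :=
  stmt0_general φ hac x hx B hB horb τ hτ
end

section
/- Let S be an asymptotically compact semiflow on a complete metric space X, and let A ⊆ X be connected with ⋃_{t ≥ t₀} S(t)A bounded for some t₀ > 0. Then the ω-limit set ω(A) is connected. -/
open Metric Set Filter Topology Bornology

/-!
Asymptotic compactness makes `ω(A)` a nonempty compact set attracting `A`. If `ω(A)` split into
two disjoint compact pieces, these would have disjoint `δ`-neighbourhoods. For large `s, t` the
connected set `S([s, t] × A)` lies in the `δ`-neighbourhood of `ω(A)` and can be chosen to come
`δ`-close to a point of each piece, so it would be disconnected by the two neighbourhoods.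
-/

theorem IsCompact.isPreconnected_of_forall_exists_isPreconnected {X : Type*} [MetricSpace X]
    {K : Set X} (hK : IsCompact K)
    (h : ∀ a ∈ K, ∀ b ∈ K, ∀ ε > 0, ∃ C, IsPreconnected C ∧ C ⊆ thickening ε K ∧
      (C ∩ ball a ε).Nonempty ∧ (C ∩ ball b ε).Nonempty) :
    IsPreconnected K := by
  rintro u v hu hv hKuv ⟨a, haK, hau⟩ ⟨b, hbK, hbv⟩
  by_contra! huv
  have hsplit : K ⊆ (K \ v) ∪ (K \ u) := fun z hz => by
    by_cases hzu : z ∈ u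
    · exact .inl ⟨hz, fun hzv => huv.subset ⟨hz, hzu, hzv⟩⟩
    · exact .inr ⟨hz, hzu⟩
  have hdisj : Disjoint (K \ v) (K \ u) :=
    disjoint_left.2 fun z ⟨hzK, hzv⟩ ⟨_, hzu⟩ => (hKuv hzK).elim hzu hzv
  obtain ⟨δ, hδ, hδdisj⟩ := hdisj.exists_thickenings (hK.diff hv) (hK.diff hu).isClosed
  obtain ⟨C, hC, hCK, ⟨c, hcC, hca⟩, ⟨d, hdC, hdb⟩⟩ := h a haK b hbK δ hδ
  have hCsplit : C ⊆ thickening δ (K \ v) ∪ thickening δ (K \ u) :=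
    hCK.trans ((thickening_subset_of_subset δ hsplit).trans (thickening_union _ _ _).subset)
  have haK' : a ∈ K \ v := ⟨haK, fun hav => huv.subset ⟨haK, hau, hav⟩⟩
  have hbK' : b ∈ K \ u := ⟨hbK, fun hbu => huv.subset ⟨hbK, hbu, hbv⟩⟩
  obtain ⟨z, -, hz₁, hz₂⟩ := hC _ _ isOpen_thickening isOpen_thickening hCsplit
    ⟨c, hcC, mem_thickening_iff.2 ⟨a, haK', hca⟩⟩ ⟨d, hdC, mem_thickening_iff.2 ⟨b, hbK', hdb⟩⟩
  exact disjoint_left.1 hδdisj hz₁ hz₂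

namespace Semiflow

variable {X : Type*} [MetricSpace X]

def orbitFrom (φ : Semiflow X) (t₀ : ℝ) (A : Set X) : Set X :=
  {y | ∃ t ≥ t₀, ∃ x ∈ A, y = φ.toFun t x}

variable {φ : Semiflow X} {A : Set X} {t₀ : ℝ}

theorem exists_subseq_tendsto_mem_omegaLimit (hac : φ.AsympCompact) (ht₀ : 0 ≤ t₀)
    (hbdd : IsBounded (φ.orbitFrom t₀ A)) {x : ℕ → X} {τ : ℕ → ℝ} (hx : ∀ n, x n ∈ A)
    (hτ : ∀ n : ℕ, t₀ + n ≤ τ n) :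
    ∃ y ∈ φ.omegaLimit A, ∃ k : ℕ → ℕ, StrictMono k ∧
      Tendsto (fun n => φ.toFun (τ (k n)) (x (k n))) atTop (𝓝 y) := by
  have hτ₀ : ∀ n, t₀ ≤ τ n := fun n => (le_add_of_nonneg_right n.cast_nonneg).trans (hτ n)
  have hτ_top : Tendsto τ atTop atTop :=
    tendsto_atTop_mono hτ (tendsto_atTop_add_const_left _ _ tendsto_natCast_atTop_atTop)
  -- Asymptotic compactness is applied to the points `S t₀ (x n)`, which form a bounded set.
  have hsplit : ∀ n, φ.toFun (τ n - t₀) (φ.toFun t₀ (x n)) = φ.toFun (τ n) (x n) := fun n => by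
    rw [← φ.map_add _ _ (sub_nonneg.2 (hτ₀ n)) ht₀, sub_add_cancel]
  obtain ⟨y, k, hk, hy⟩ := hac (fun n => φ.toFun t₀ (x n)) (fun n => τ n - t₀)
    (fun n => sub_nonneg.2 (hτ₀ n))
    (hbdd.subset <| range_subset_iff.2 fun n => ⟨t₀, le_rfl, x n, hx n, rfl⟩)
    (by simpa only [sub_eq_add_neg] using tendsto_atTop_add_const_right _ (-t₀) hτ_top)
    (hbdd.subset <| range_subset_iff.2 fun n => ⟨τ n, hτ₀ n, x n, hx n, hsplit n⟩)
  simp only [hsplit] at hy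
  exact ⟨y, ⟨x ∘ k, τ ∘ k, fun n => hx _, fun n => ht₀.trans (hτ₀ _),
    hτ_top.comp hk.tendsto_atTop, hy⟩, k, hk, hy⟩

theorem exists_dist_lt_of_mem_omegaLimit {y : X} (hy : y ∈ φ.omegaLimit A) (T : ℝ) {ε : ℝ}
    (hε : 0 < ε) : ∃ x ∈ A, ∃ t > T, dist (φ.toFun t x) y < ε := by
  obtain ⟨x, t, hx, -, ht, hxy⟩ := hy
  obtain ⟨n, htn, hn⟩ := ((ht.eventually_gt_atTop T).and (tendsto_nhds.1 hxy ε hε)).exists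
  exact ⟨x n, hx n, t n, htn, hn⟩

theorem omegaLimit_nonempty (hac : φ.AsympCompact) (ht₀ : 0 ≤ t₀)
    (hbdd : IsBounded (φ.orbitFrom t₀ A)) (hA : A.Nonempty) : (φ.omegaLimit A).Nonempty := by
  obtain ⟨a, ha⟩ := hA
  obtain ⟨y, hy, -⟩ := exists_subseq_tendsto_mem_omegaLimit hac ht₀ hbdd (fun _ => ha)
    (τ := fun n => t₀ + n) fun _ => le_rfl
  exact ⟨y, hy⟩

theorem isCompact_omegaLimit (hac : φ.AsympCompact) (ht₀ : 0 ≤ t₀)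
    (hbdd : IsBounded (φ.orbitFrom t₀ A)) : IsCompact (φ.omegaLimit A) := by
  refine IsSeqCompact.isCompact fun y hy => ?_
  choose x hx τ hτ hxy using fun m : ℕ =>
    exists_dist_lt_of_mem_omegaLimit (hy m) (t₀ + m) (Nat.one_div_pos_of_nat (n := m))
  obtain ⟨z, hz, k, hk, hxz⟩ :=
    exists_subseq_tendsto_mem_omegaLimit hac ht₀ hbdd hx fun m => (hτ m).le
  refine ⟨z, hz, k, hk, hxz.congr_dist ?_⟩
  exact squeeze_zero (fun _ => dist_nonneg) (fun n => (hxy (k n)).le)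
    (tendsto_one_div_add_atTop_nhds_zero_nat.comp hk.tendsto_atTop)

theorem attracts_omegaLimit (hac : φ.AsympCompact) (ht₀ : 0 ≤ t₀)
    (hbdd : IsBounded (φ.orbitFrom t₀ A)) : φ.Attracts (φ.omegaLimit A) A := by
  intro ε hε
  by_contra! hfar
  choose τ hτ x hx hxε using fun n : ℕ =>
    hfar (t₀ + n + 1) (by linarith [(n.cast_nonneg : (0 : ℝ) ≤ n)])
  obtain ⟨z, hz, k, hk, hxz⟩ :=
    exists_subseq_tendsto_mem_omegaLimit hac ht₀ hbdd hx (τ := τ) fun n => by linarith [hτ n]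
  have hεz : ε ≤ infDist z (φ.omegaLimit A) :=
    ge_of_tendsto (((continuous_infDist_pt _).tendsto z).comp hxz)
      (Eventually.of_forall fun n => hxε (k n))
  rw [infDist_zero_of_mem hz] at hεz
  linarith

theorem isPreconnected_omegaLimit (hac : φ.AsympCompact) (ht₀ : 0 ≤ t₀)
    (hbdd : IsBounded (φ.orbitFrom t₀ A)) (hA : IsPreconnected A) :
    IsPreconnected (φ.omegaLimit A) := by
  refine (isCompact_omegaLimit hac ht₀ hbdd).isPreconnected_of_forall_exists_isPreconnected
    fun a ha b hb ε hε => ?_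
  obtain ⟨T, hT, hattr⟩ := attracts_omegaLimit hac ht₀ hbdd ε hε
  obtain ⟨p, hp, s, hs, hpa⟩ := exists_dist_lt_of_mem_omegaLimit ha T hε
  obtain ⟨q, hq, t, ht, hqb⟩ := exists_dist_lt_of_mem_omegaLimit hb T hε
  have hT_lt : ∀ r ∈ uIcc s t, T < r := fun r hr => (lt_inf_iff.2 ⟨hs, ht⟩).trans_le hr.1
  refine ⟨(fun p : ℝ × X => φ.toFun p.1 p.2) '' (uIcc s t ×ˢ A), ?_, ?_,
    ⟨_, ⟨(s, p), ⟨left_mem_uIcc, hp⟩, rfl⟩, mem_ball.2 hpa⟩,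
    ⟨_, ⟨(t, q), ⟨right_mem_uIcc, hq⟩, rfl⟩, mem_ball.2 hqb⟩⟩
  · refine (isPreconnected_uIcc.prod hA).image _ (φ.continuousOn.mono ?_)
    exact fun r hr => ⟨(hT.trans (hT_lt _ hr.1)).le, mem_univ _⟩
  · rintro _ ⟨⟨r, x⟩, ⟨hr, hx⟩, rfl⟩
    exact (mem_thickening_iff_infDist_lt ⟨a, ha⟩).2 (hattr r (hT_lt r hr) x hx)

end Semiflow

theorem stmt2_general {X : Type*} [MetricSpace X] (φ : Semiflow X)
    (hac : φ.AsympCompact) (A : Set X) (hA : IsConnected A)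
    (t₀ : ℝ) (ht₀ : 0 < t₀)
    (hbdd : Bornology.IsBounded {y : X | ∃ t ≥ t₀, ∃ x ∈ A, y = φ.toFun t x}) :
    IsConnected (φ.omegaLimit A) :=
  ⟨Semiflow.omegaLimit_nonempty hac ht₀.le hbdd hA.nonempty,
    Semiflow.isPreconnected_omegaLimit hac ht₀.le hbdd hA.isPreconnected⟩

/-- If `A` is connected and `⋃_{t ≥ t₀} S t A` is bounded for some `t₀ > 0`,
then `ω(A)` is connected. -/
theorem stmt2 {X : Type*} [MetricSpace X] [CompleteSpace X] (φ : Semiflow X)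
    (hac : φ.AsympCompact) (A : Set X) (hA : IsConnected A)
    (t₀ : ℝ) (ht₀ : 0 < t₀)
    (hbdd : Bornology.IsBounded {y : X | ∃ t ≥ t₀, ∃ x ∈ A, y = φ.toFun t x}) :
    IsConnected (φ.omegaLimit A) :=
  stmt2_general φ hac A hA t₀ ht₀ hbdd
end

section
/- Let S be an asymptotically compact semiflow on a complete metric space X and let 𝒜 be an attractor of S with attraction basin Ω = Ω(𝒜). Then 𝒜 attracts every compact subset K of Ω. -/
open Metric Set Filter Topology Bornology

/-! Every point of `K` eventually enters the open set `interior U` that `𝒜` attracts uniformly,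
and by continuity of the time-`s` map so does a whole neighborhood of it. Finitely many such
neighborhoods cover `K`, and after the largest of their entrance times all of `K` is attracted
uniformly. -/

namespace Semiflow

variable {X : Type*} [MetricSpace X] (φ : Semiflow X)

theorem continuous_toFun_s4 {s : ℝ} (hs : 0 ≤ s) : Continuous (φ.toFun s) :=
  continuousOn_univ.mp <| φ.continuousOn.comp (Continuous.prodMk_right s).continuousOn
    fun y _ => ⟨hs, mem_univ y⟩

theorem empty_attracts (B : Set X) : φ.Attracts ∅ B :=
  fun ε hε => ⟨1, one_pos, fun t _ x _ => by simpa [infDist_empty] using hε⟩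

theorem attracts_empty (M : Set X) : φ.Attracts M ∅ :=
  fun _ _ => ⟨1, one_pos, fun _ _ _ hx => absurd hx (notMem_empty _)⟩

variable {φ} {M B C : Set X}

theorem Attracts.mono (h : φ.Attracts M B) (hCB : C ⊆ B) : φ.Attracts M C :=
  fun ε hε => (h ε hε).imp fun _ ⟨hT, hB⟩ => ⟨hT, fun t ht x hx => hB t ht x (hCB hx)⟩

theorem Attracts.union (hB : φ.Attracts M B) (hC : φ.Attracts M C) : φ.Attracts M (B ∪ C) := by
  intro ε hε
  obtain ⟨T₁, hT₁, hB⟩ := hB ε hε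
  obtain ⟨T₂, hT₂, hC⟩ := hC ε hε
  refine ⟨max T₁ T₂, lt_max_of_lt_left hT₁, fun t ht x hx => ?_⟩
  rcases hx with hx | hx
  · exact hB t (lt_of_le_of_lt (le_max_left _ _) ht) x hx
  · exact hC t (lt_of_le_of_lt (le_max_right _ _) ht) x hx

theorem attracts_biUnion_finset {ι : Type*} {B : ι → Set X} (F : Finset ι)
    (h : ∀ i ∈ F, φ.Attracts M (B i)) : φ.Attracts M (⋃ i ∈ F, B i) := by
  classical
  induction F using Finset.induction_on with
  | empty => simpa using φ.attracts_empty M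
  | insert i F _ ih =>
    rw [Finset.set_biUnion_insert]
    exact (h i (F.mem_insert_self i)).union (ih fun j hj => h j (Finset.mem_insert_of_mem hj))

theorem Attracts.preimage (h : φ.Attracts M B) {s : ℝ} (hs : 0 ≤ s) :
    φ.Attracts M (φ.toFun s ⁻¹' B) := by
  intro ε hε
  obtain ⟨T, hT, hB⟩ := h ε hε
  refine ⟨T + s, by linarith, fun t ht x hx => ?_⟩
  have hsplit : φ.toFun t x = φ.toFun (t - s) (φ.toFun s x) := by
    rw [← φ.map_add _ _ (by linarith) hs, sub_add_cancel]
  exact hsplit ▸ hB (t - s) (by linarith) _ hx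

theorem Attracts.of_isCompact {V K : Set X} (hV : IsOpen V) (hMV : φ.Attracts M V)
    (hK : IsCompact K) (hKV : ∀ x ∈ K, ∃ s ≥ 0, φ.toFun s x ∈ V) : φ.Attracts M K := by
  choose! s hs_nonneg hs_mem using hKV
  obtain ⟨F, hFK, hKcover⟩ := hK.elim_nhds_subcover (fun x => φ.toFun (s x) ⁻¹' V)
    fun x hx => (hV.preimage (φ.continuous_toFun_s4 (hs_nonneg x hx))).mem_nhds (hs_mem x hx)
  exact (attracts_biUnion_finset F fun x hx => hMV.preimage (hs_nonneg x (hFK x hx))).mono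
    hKcover

theorem eventually_mem_of_mem_basin {A V : Set X} (hA : IsCompact A) (hne : A.Nonempty)
    (hV : IsOpen V) (hAV : A ⊆ V) {x : X} (hx : x ∈ φ.basin A) :
    ∀ᶠ t in atTop, φ.toFun t x ∈ V := by
  obtain ⟨η, hη, hthick⟩ := hA.exists_thickening_subset_open hV hAV
  filter_upwards [hx (Iio_mem_nhds hη)] with t ht
  exact hthick ((mem_thickening_iff_infDist_lt hne).2 ht)

end Semiflow

open Semiflow in
theorem stmt4_general {X : Type*} [MetricSpace X] (φ : Semiflow X)
    (𝒜 : Set X) (h𝒜 : φ.IsAttractor 𝒜)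
    (K : Set X) (hK : IsCompact K) (hKΩ : K ⊆ φ.basin 𝒜) :
    φ.Attracts 𝒜 K := by
  obtain ⟨h𝒜_compact, -, U, h𝒜U, hattr⟩ := h𝒜
  rcases 𝒜.eq_empty_or_nonempty with rfl | hne
  · exact φ.empty_attracts K
  refine (hattr.mono interior_subset).of_isCompact isOpen_interior hK fun x hx => ?_
  obtain ⟨s, hs_mem, hs_nonneg⟩ := ((eventually_mem_of_mem_basin h𝒜_compact hne
    isOpen_interior h𝒜U (hKΩ hx)).and (eventually_ge_atTop 0)).exists
  exact ⟨s, hs_nonneg, hs_mem⟩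

/-- An attractor `𝒜` attracts every compact subset of its attraction basin. -/
theorem stmt4 {X : Type*} [MetricSpace X] [CompleteSpace X] (φ : Semiflow X)
    (hac : φ.AsympCompact) (𝒜 : Set X) (h𝒜 : φ.IsAttractor 𝒜)
    (K : Set X) (hK : IsCompact K) (hKΩ : K ⊆ φ.basin 𝒜) :
    φ.Attracts 𝒜 K :=
  stmt4_general φ 𝒜 h𝒜 K hK hKΩ
end

section
/- Let S be an asymptotically compact semiflow on a complete metric space X and let 𝒜 be an attractor of S. Then 𝒜 is Lyapunov stable: for every ε > 0 there exists δ > 0 such that S(t)B(𝒜,δ) ⊆ B(𝒜,ε) for all t ≥ 0. -/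
open Metric Set Filter Topology Bornology

namespace Semiflow

variable {X : Type*} [MetricSpace X] (φ : Semiflow X)

theorem continuous_toFun_max_zero :
    Continuous fun p : ℝ × X => φ.toFun (max p.1 0) p.2 :=
  φ.continuousOn.comp_continuous (f := fun p : ℝ × X => (max p.1 0, p.2)) (by fun_prop)
    fun p => ⟨le_max_right p.1 0, mem_univ _⟩

/-- The tube lemma for the compact set `[0, T] × K`. -/
theorem exists_thickening_mapsTo {K V : Set X} (hK : IsCompact K) (hV : IsOpen V) (T : ℝ)
    (hKV : ∀ t ∈ Icc 0 T, MapsTo (φ.toFun t) K V) :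
    ∃ δ > 0, ∀ t ∈ Icc 0 T, MapsTo (φ.toFun t) (thickening δ K) V := by
  set F : ℝ × X → X := fun p => φ.toFun (max p.1 0) p.2
  have hsub : Icc 0 T ×ˢ K ⊆ F ⁻¹' V := fun p ⟨ht, ha⟩ => by
    simpa only [mem_preimage, F, max_eq_left ht.1] using hKV p.1 ht ha
  obtain ⟨δ, hδ, hδW⟩ := (isCompact_Icc.prod hK).exists_thickening_subset_open
    (hV.preimage φ.continuous_toFun_max_zero) hsub
  refine ⟨δ, hδ, fun t ht x hx => ?_⟩
  obtain ⟨a, ha, hxa⟩ := mem_thickening_iff.1 hx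
  have hpair : (t, x) ∈ thickening δ (Icc 0 T ×ˢ K) :=
    mem_thickening_iff.2 ⟨(t, a), ⟨ht, ha⟩, by simpa [Prod.dist_eq] using hxa⟩
  simpa only [mem_preimage, F, max_eq_left ht.1] using hδW hpair

end Semiflow

theorem stmt5_general {X : Type*} [MetricSpace X] (φ : Semiflow X)
    (𝒜 : Set X) (h𝒜 : φ.IsAttractor 𝒜) :
    ∀ ε > (0:ℝ), ∃ δ > (0:ℝ), ∀ t ≥ (0:ℝ), ∀ x : X,
      Metric.infDist x 𝒜 < δ → Metric.infDist (φ.toFun t x) 𝒜 < ε := by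
  intro ε hε
  obtain ⟨hcomp, hinv, U, hAU, hatt⟩ := h𝒜
  rcases 𝒜.eq_empty_or_nonempty with rfl | hne
  · exact ⟨ε, hε, fun _ _ _ _ => by simpa using hε⟩
  have hthick (r : ℝ) {y : X} := mem_thickening_iff_infDist_lt (δ := r) (x := y) hne
  -- Large times are handled by attraction of `U`, bounded times by continuity.
  obtain ⟨r, hr, hrU⟩ := hcomp.exists_thickening_subset_open isOpen_interior hAU
  obtain ⟨T, -, hT⟩ := hatt ε hε
  obtain ⟨δ, hδ, hδT⟩ := φ.exists_thickening_mapsTo hcomp isOpen_thickening T fun t ht =>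
    (mapsTo_iff_image_subset.2 (hinv t ht.1).subset).mono_right (self_subset_thickening hε 𝒜)
  refine ⟨min r δ, lt_min hr hδ, fun t ht x hx => ?_⟩
  rcases le_or_gt t T with htT | hTt
  · exact (hthick ε).1 <|
      hδT t ⟨ht, htT⟩ ((hthick δ).2 (hx.trans_le (min_le_right _ _)))
  · exact hT t hTt x <|
      interior_subset (hrU ((hthick r).2 (hx.trans_le (min_le_left _ _))))

/-- An attractor is Lyapunov stable: for every `ε > 0` there is `δ > 0`
such that `S t (B(𝒜,δ)) ⊆ B(𝒜,ε)` for all `t ≥ 0`. -/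
theorem stmt5 {X : Type*} [MetricSpace X] [CompleteSpace X] (φ : Semiflow X)
    (hac : φ.AsympCompact) (𝒜 : Set X) (h𝒜 : φ.IsAttractor 𝒜) :
    ∀ ε > (0:ℝ), ∃ δ > (0:ℝ), ∀ t ≥ (0:ℝ), ∀ x : X,
      Metric.infDist x 𝒜 < δ → Metric.infDist (φ.toFun t x) 𝒜 < ε :=
  stmt5_general φ 𝒜 h𝒜
end

section
/- (Existence of attractors) Let S be an asymptotically compact semiflow on a complete metric space X. Assume there is a bounded closed subset A ⊆ X which attracts a neighborhood of itself. Then S has an attractor 𝒜 contained in A. -/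
open Metric Set Filter Topology Bornology

/-!
The attractor is the ω-limit set `𝒜 = ω(U)` of the neighbourhood `U` attracted by `A`. Since `A`
is bounded, orbits starting in `U` eventually stay in the bounded set `B(A,1)`, so asymptotic
compactness makes every sequence `S(tₙ)xₙ` with `xₙ ∈ U`, `tₙ → ∞` subconverge, necessarily to a
point of `ω(U)`. This single fact gives compactness, invariance and attractivity of `ω(U)`; that
`ω(U) ⊆ A` comes from `A` being closed and attracting `U`.
-/

namespace Semiflow

variable {X : Type*} [MetricSpace X] (φ : Semiflow X)

def EventuallyBounded (U : Set X) : Prop :=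
  ∃ T : ℝ, ∃ K : Set X, IsBounded K ∧ ∀ t > T, MapsTo (φ.toFun t) U K

theorem Attracts.eventuallyBounded {φ : Semiflow X} {A U : Set X} (h : φ.Attracts A U)
    (hA : IsBounded A) (hne : A.Nonempty) : φ.EventuallyBounded U := by
  obtain ⟨T, -, hT⟩ := h 1 one_pos
  exact ⟨T, thickening 1 A, hA.thickening, fun t ht x hx =>
    (mem_thickening_iff_infDist_lt hne).2 (hT t ht x hx)⟩

theorem omegaLimit_subset_closure {M U : Set X} (hM : M.Nonempty) (h : φ.Attracts M U) :
    φ.omegaLimit U ⊆ closure M := by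
  rintro y ⟨x, t, hx, -, ht, hy⟩
  rw [mem_closure_iff_infDist_zero hM]
  refine le_antisymm (le_of_forall_pos_le_add fun ε hε => ?_) infDist_nonneg
  obtain ⟨T, -, hT⟩ := h ε hε
  refine le_of_tendsto ((continuous_infDist_pt M).tendsto y |>.comp hy) ?_
  filter_upwards [ht.eventually_gt_atTop T] with n hn
  simpa using (hT (t n) hn (x n) (hx n)).le

theorem image_omegaLimit_subset {t : ℝ} (ht : 0 ≤ t) (U : Set X) :
    φ.toFun t '' φ.omegaLimit U ⊆ φ.omegaLimit U := by
  rintro _ ⟨y, ⟨x, r, hx, hr0, hr, hy⟩, rfl⟩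
  refine ⟨x, fun n => t + r n, hx, fun n => add_nonneg ht (hr0 n),
    tendsto_atTop_add_const_left _ _ hr, ?_⟩
  exact ((φ.continuous_toFun ht).tendsto y |>.comp hy).congr
    fun n => (φ.map_add t (r n) ht (hr0 n) (x n)).symm

theorem exists_mem_omegaLimit_tendsto (hac : φ.AsympCompact) {U : Set X}
    (hU : φ.EventuallyBounded U) {x : ℕ → X} {t : ℕ → ℝ} (hx : ∀ n, x n ∈ U)
    (ht0 : ∀ n, 0 ≤ t n) (ht : Tendsto t atTop atTop) :
    ∃ y ∈ φ.omegaLimit U, ∃ k : ℕ → ℕ, StrictMono k ∧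
      Tendsto (fun n => φ.toFun (t (k n)) (x (k n))) atTop (𝓝 y) := by
  obtain ⟨T, K, hK, hUK⟩ := hU
  set τ := max T 0 + 1
  have hτT : T < τ := by linarith [le_max_left T 0]
  have hτ0 : 0 ≤ τ := by linarith [le_max_right T 0]
  obtain ⟨k₀, hk₀, hk₀t⟩ := extraction_forall_of_eventually
    (P := fun n m => τ + n < t m) fun n => ht.eventually_gt_atTop _
  -- Asymptotic compactness is applied to the points `S(τ) x`, which already lie in `K`.
  set s : ℕ → ℝ := fun n => t (k₀ n) - τ
  have hs : ∀ n : ℕ, (n : ℝ) ≤ s n := fun n => by linarith [hk₀t n]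
  have hshift : ∀ n, φ.toFun (s n) (φ.toFun τ (x (k₀ n))) = φ.toFun (t (k₀ n)) (x (k₀ n)) :=
    fun n => by rw [← φ.map_add _ _ ((Nat.cast_nonneg n).trans (hs n)) hτ0, sub_add_cancel]
  obtain ⟨y, k₁, hk₁, hy⟩ := hac (fun n => φ.toFun τ (x (k₀ n))) s
    (fun n => (Nat.cast_nonneg n).trans (hs n))
    (hK.subset <| range_subset_iff.2 fun n => hUK τ hτT (hx _))
    (tendsto_atTop_mono hs tendsto_natCast_atTop_atTop)
    (hK.subset <| range_subset_iff.2 fun n => hshift n ▸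
      hUK _ (by linarith [hk₀t n, (Nat.cast_nonneg n : (0 : ℝ) ≤ n)]) (hx _))
  simp only [hshift] at hy
  exact ⟨y, ⟨_, _, fun n => hx _, fun n => ht0 _, ht.comp (hk₀.comp hk₁).tendsto_atTop, hy⟩,
    k₀ ∘ k₁, hk₀.comp hk₁, hy⟩

theorem omegaLimit_nonempty_s6 (hac : φ.AsympCompact) {U : Set X} (hU : φ.EventuallyBounded U)
    (hne : U.Nonempty) : (φ.omegaLimit U).Nonempty := by
  obtain ⟨a, ha⟩ := hne
  obtain ⟨y, hy, -⟩ := φ.exists_mem_omegaLimit_tendsto hac hU (fun _ => ha)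
    (fun n => Nat.cast_nonneg n) tendsto_natCast_atTop_atTop
  exact ⟨y, hy⟩

theorem exists_near_of_mem_omegaLimit {U : Set X} {y : X} (hy : y ∈ φ.omegaLimit U) (T : ℝ)
    {ε : ℝ} (hε : 0 < ε) : ∃ x ∈ U, ∃ s, T ≤ s ∧ 0 ≤ s ∧ dist (φ.toFun s x) y < ε := by
  obtain ⟨x, t, hx, ht0, ht, hxy⟩ := hy
  obtain ⟨n, hTn, hn⟩ :=
    ((ht.eventually_ge_atTop T).and (Metric.tendsto_nhds.1 hxy ε hε)).exists
  exact ⟨x n, hx n, t n, hTn, ht0 n, hn⟩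

theorem isCompact_omegaLimit_s6 (hac : φ.AsympCompact) {U : Set X} (hU : φ.EventuallyBounded U) :
    IsCompact (φ.omegaLimit U) := by
  refine IsSeqCompact.isCompact fun y hy => ?_
  -- Diagonal argument: approximate `y m` by an orbit point `S(s m) (a m)` with `s m ≥ m`.
  choose a ha s hs hs0 hdist using fun m : ℕ =>
    φ.exists_near_of_mem_omegaLimit (hy m) m (Nat.one_div_pos_of_nat (n := m))
  obtain ⟨z, hz, k, hk, hkz⟩ := φ.exists_mem_omegaLimit_tendsto hac hU ha hs0
    (tendsto_atTop_mono hs tendsto_natCast_atTop_atTop)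
  have hdist0 : Tendsto (fun m => dist (φ.toFun (s m) (a m)) (y m)) atTop (𝓝 0) :=
    squeeze_zero (fun _ => dist_nonneg) (fun m => (hdist m).le)
      tendsto_one_div_add_atTop_nhds_zero_nat
  exact ⟨z, hz, k, hk, hkz.congr_dist (hdist0.comp hk.tendsto_atTop)⟩

theorem omegaLimit_subset_image (hac : φ.AsympCompact) {U : Set X} (hU : φ.EventuallyBounded U)
    {t : ℝ} (ht : 0 ≤ t) : φ.omegaLimit U ⊆ φ.toFun t '' φ.omegaLimit U := by
  rintro y ⟨x, r, hx, -, hr, hy⟩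
  set s : ℕ → ℝ := fun n => max (r n - t) 0
  have hs : Tendsto s atTop atTop :=
    tendsto_atTop_mono (fun n => le_max_left _ _) (tendsto_atTop_add_const_right _ (-t) hr)
  obtain ⟨z, hz, k, hk, hkz⟩ := φ.exists_mem_omegaLimit_tendsto hac hU hx
    (fun n => le_max_right _ _) hs
  refine ⟨z, hz, tendsto_nhds_unique (((φ.continuous_toFun ht).tendsto z).comp hkz |>.congr' ?_)
    (hy.comp hk.tendsto_atTop)⟩
  filter_upwards [(hr.comp hk.tendsto_atTop).eventually_ge_atTop t] with n hn
  simp only [Function.comp_apply] at hn ⊢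
  rw [← φ.map_add _ _ ht (le_max_right _ _), max_eq_left (sub_nonneg.2 hn), add_sub_cancel]

theorem invariant_omegaLimit (hac : φ.AsympCompact) {U : Set X} (hU : φ.EventuallyBounded U) :
    φ.Invariant (φ.omegaLimit U) := fun _ ht =>
  (φ.image_omegaLimit_subset ht U).antisymm (φ.omegaLimit_subset_image hac hU ht)

theorem attracts_omegaLimit_s6 (hac : φ.AsympCompact) {U : Set X} (hU : φ.EventuallyBounded U) :
    φ.Attracts (φ.omegaLimit U) U := by
  intro ε hε
  by_contra! hfar
  choose t ht x hx hxε using fun n : ℕ => hfar ((n : ℝ) + 1) (by positivity)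
  have htn : ∀ n : ℕ, (n : ℝ) ≤ t n := fun n => by linarith [ht n]
  obtain ⟨y, hy, k, -, hky⟩ := φ.exists_mem_omegaLimit_tendsto hac hU hx
    (fun n => (Nat.cast_nonneg n).trans (htn n)) (tendsto_atTop_mono htn tendsto_natCast_atTop_atTop)
  have hεy : ε ≤ infDist y (φ.omegaLimit U) :=
    ge_of_tendsto' ((continuous_infDist_pt _).tendsto y |>.comp hky) fun n => hxε (k n)
  linarith [infDist_zero_of_mem hy]

end Semiflow

theorem stmt6_general {X : Type*} [MetricSpace X] (φ : Semiflow X)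
    (hac : φ.AsympCompact) (A : Set X) (hA : A.Nonempty)
    (hbdd : Bornology.IsBounded A) (hcl : IsClosed A)
    (hattr : ∃ U : Set X, A ⊆ interior U ∧ φ.Attracts A U) :
    ∃ 𝒜 : Set X, 𝒜.Nonempty ∧ 𝒜 ⊆ A ∧ φ.IsAttractor 𝒜 := by
  obtain ⟨U, hAU, hattrU⟩ := hattr
  have hU : φ.EventuallyBounded U := hattrU.eventuallyBounded hbdd hA
  have hsub : φ.omegaLimit U ⊆ A := hcl.closure_eq ▸ φ.omegaLimit_subset_closure hA hattrU
  exact ⟨φ.omegaLimit U, φ.omegaLimit_nonempty_s6 hac hU (hA.mono (hAU.trans interior_subset)),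
    hsub, φ.isCompact_omegaLimit_s6 hac hU, φ.invariant_omegaLimit hac hU,
    U, hsub.trans hAU, φ.attracts_omegaLimit_s6 hac hU⟩

/-- Existence of attractors: If a nonempty bounded closed set `A` attracts
a neighborhood of itself, then the semiflow has an attractor contained in `A`. -/
theorem stmt6 {X : Type*} [MetricSpace X] [CompleteSpace X] (φ : Semiflow X)
    (hac : φ.AsympCompact) (A : Set X) (hA : A.Nonempty)
    (hbdd : Bornology.IsBounded A) (hcl : IsClosed A)
    (hattr : ∃ U : Set X, A ⊆ interior U ∧ φ.Attracts A U) :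
    ∃ 𝒜 : Set X, 𝒜.Nonempty ∧ 𝒜 ⊆ A ∧ φ.IsAttractor 𝒜 :=
  stmt6_general φ hac A hA hbdd hcl hattr
end

section
/- Let S be an asymptotically compact semiflow on a complete metric space X and let 𝒜 be an attractor of S. If A ⊆ 𝒜 is an attractor of the restricted semiflow S|𝒜 on 𝒜 (i.e., A is compact, invariant, and attracts a neighborhood of itself in the subspace 𝒜), then A is an attractor of S in X. -/
/-!
Fix `ε > 0` with the closed `ε`-neighbourhood `N` of `A` inside both the relative basin of `A`
and a neighbourhood attracted by `𝒜`. Orbit segments of length `t → ∞` lying in `N` end close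
to `A`: by asymptotic compactness, the points `S (t - τ) x` accumulate at some `w`, which lies
in `𝒜` because `𝒜` attracts `N`, so `S τ w` is close to `A`. Hence an orbit starting near `A`
can leave `N` only within a bounded time, which continuity of the flow near the compact invariant
set `A` rules out; so such orbits stay in `N` and are attracted to `A`.
-/

open Metric Set Filter Topology Bornology

namespace Semiflow

variable {X : Type*} [MetricSpace X] (φ : Semiflow X)

def AttractsSegmentsIn (A N : Set X) : Prop :=
  ∀ ε > (0:ℝ), ∃ T : ℝ, ∀ x t, T < t → (∀ u ∈ Ico 0 t, φ.toFun u x ∈ N) →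
    infDist (φ.toFun t x) A < ε

theorem continuousOn_orbit (x : X) : ContinuousOn (fun t => φ.toFun t x) (Ici 0) :=
  φ.continuousOn.comp (continuous_id.prodMk continuous_const).continuousOn fun _ ht =>
    ⟨ht, mem_univ _⟩

theorem Attracts.tendsto_infDist {φ : Semiflow X} {M B : Set X} (h : φ.Attracts M B)
    {ι : Type*} {l : Filter ι} {x : ι → X} {t : ι → ℝ} (hx : ∀ i, x i ∈ B)
    (ht : Tendsto t l atTop) :
    Tendsto (fun i => infDist (φ.toFun (t i) (x i)) M) l (𝓝 0) := by
  refine Metric.tendsto_nhds.2 fun ε hε => ?_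
  obtain ⟨T, -, hT⟩ := h ε hε
  filter_upwards [ht.eventually_gt_atTop T] with i hi
  rw [Real.dist_0_eq_abs, abs_of_nonneg infDist_nonneg]
  exact hT _ hi _ (hx i)

theorem exists_subseq_tendsto_mem_of_attracts (hac : φ.AsympCompact) {𝒜 U N : Set X}
    (h𝒜 : IsClosed 𝒜) (h𝒜ne : 𝒜.Nonempty) (hU : φ.Attracts 𝒜 U) (hN : IsBounded N)
    (hNc : IsClosed N) (hNU : N ⊆ U) {x : ℕ → X} {r : ℕ → ℝ} (hr0 : ∀ n, 0 ≤ r n)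
    (hr : Tendsto r atTop atTop) (hx : ∀ n, x n ∈ N) (hrx : ∀ n, φ.toFun (r n) (x n) ∈ N) :
    ∃ w ∈ 𝒜 ∩ N, ∃ k : ℕ → ℕ, StrictMono k ∧
      Tendsto (fun n => φ.toFun (r (k n)) (x (k n))) atTop (𝓝 w) := by
  obtain ⟨w, k, hk, hw⟩ := hac x r hr0 (hN.subset (range_subset_iff.2 hx)) hr
    (hN.subset (range_subset_iff.2 hrx))
  have hdist : Tendsto (fun n => infDist (φ.toFun (r (k n)) (x (k n))) 𝒜) atTop (𝓝 0) :=
    hU.tendsto_infDist (fun n => hNU (hx (k n))) (hr.comp hk.tendsto_atTop)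
  have hw𝒜 : infDist w 𝒜 = 0 :=
    tendsto_nhds_unique (((continuous_infDist_pt 𝒜).tendsto w).comp hw) hdist
  exact ⟨w, ⟨(h𝒜.mem_iff_infDist_zero h𝒜ne).2 hw𝒜,
    hNc.mem_of_tendsto hw (Eventually.of_forall fun n => hrx (k n))⟩, k, hk, hw⟩

theorem attractsSegmentsIn_of_attracts (hac : φ.AsympCompact) {𝒜 A U V N : Set X}
    (h𝒜 : IsClosed 𝒜) (h𝒜ne : 𝒜.Nonempty) (hU : φ.Attracts 𝒜 U) (hV : φ.Attracts A (𝒜 ∩ V))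
    (hN : IsBounded N) (hNc : IsClosed N) (hNU : N ⊆ U) (hNV : N ⊆ V) :
    φ.AttractsSegmentsIn A N := by
  intro ε hε
  obtain ⟨T, hT0, hT⟩ := hV ε hε
  set τ := T + 1 with hτ
  by_contra! hbad
  choose x t ht horb hfar using fun n : ℕ => hbad (τ + n)
  set r : ℕ → ℝ := fun n => t n - τ
  have hnr : ∀ n : ℕ, (n : ℝ) < r n := fun n => by simp only [r]; linarith [ht n]
  have hr0 : ∀ n, 0 ≤ r n := fun n => (Nat.cast_nonneg n).trans (hnr n).le
  have hr : Tendsto r atTop atTop :=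
    tendsto_atTop_mono (fun n => (hnr n).le) tendsto_natCast_atTop_atTop
  have hx : ∀ n, x n ∈ N := fun n => by
    simpa only [φ.map_zero] using horb n 0 ⟨le_rfl, by linarith [hr0 n]⟩
  obtain ⟨w, ⟨hw𝒜, hwN⟩, k, hk, hw⟩ := φ.exists_subseq_tendsto_mem_of_attracts hac h𝒜 h𝒜ne
    hU hN hNc hNU hr0 hr hx fun n => horb n (r n) ⟨hr0 n, by simp only [r]; linarith⟩
  have hsplit : ∀ n, φ.toFun (t n) (x n) = φ.toFun τ (φ.toFun (r n) (x n)) := fun n => by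
    rw [← φ.map_add τ (r n) (by linarith) (hr0 n)]
    simp only [r, add_sub_cancel]
  have hlim : Tendsto (fun n => φ.toFun (t (k n)) (x (k n))) atTop (𝓝 (φ.toFun τ w)) := by
    refine (((φ.continuous_toFun (by linarith)).tendsto w).comp hw).congr fun n => ?_
    exact (hsplit (k n)).symm
  have hfar_lim : ε ≤ infDist (φ.toFun τ w) A :=
    ge_of_tendsto (((continuous_infDist_pt A).tendsto _).comp hlim)
      (Eventually.of_forall fun n => hfar (k n))
  exact hfar_lim.not_gt (hT τ (by linarith) w ⟨hw𝒜, hNV hwN⟩)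

theorem AttractsSegmentsIn.attracts {φ : Semiflow X} {A N U : Set X}
    (h : φ.AttractsSegmentsIn A N) (hU : ∀ t ≥ (0:ℝ), MapsTo (φ.toFun t) U N) :
    φ.Attracts A U := by
  intro ε hε
  obtain ⟨T, hT⟩ := h ε hε
  exact ⟨max T 1, by positivity, fun t ht x hx =>
    hT x t ((le_max_left T 1).trans_lt ht) fun u hu => hU u hu.1 hx⟩

theorem exists_mapsTo_thickening_of_mapsTo {A W : Set X} (hA : IsCompact A)
    (hinv : ∀ t ≥ (0:ℝ), MapsTo (φ.toFun t) A A) (hW : IsOpen W) (hAW : A ⊆ W) (T : ℝ) :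
    ∃ δ > 0, ∀ t ∈ Icc 0 T, MapsTo (φ.toFun t) (thickening δ A) W := by
  obtain ⟨n, hn, hpre⟩ := continuousOn_iff'.1 φ.continuousOn W hW
  have hAn : Icc 0 T ×ˢ A ⊆ n := fun p ⟨ht, ha⟩ => by
    have hp : p ∈ (fun p : ℝ × X => φ.toFun p.1 p.2) ⁻¹' W ∩ Ici 0 ×ˢ univ :=
      ⟨hAW (hinv p.1 ht.1 ha), ht.1, mem_univ _⟩
    exact (hpre ▸ hp).1
  obtain ⟨u, v, -, hv, hTu, hAv, huv⟩ := generalized_tube_lemma isCompact_Icc hA hn hAn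
  obtain ⟨δ, hδ, hδv⟩ := hA.exists_thickening_subset_open hv hAv
  refine ⟨δ, hδ, fun t ht x hx => ?_⟩
  have hp : (t, x) ∈ n ∩ Ici 0 ×ˢ univ := ⟨huv ⟨hTu ht, hδv hx⟩, ht.1, mem_univ _⟩
  exact (hpre.symm ▸ hp).1

theorem AttractsSegmentsIn.exists_mapsTo_thickening {φ : Semiflow X} {A N : Set X}
    (h : φ.AttractsSegmentsIn A N) (hA : IsCompact A) (hAne : A.Nonempty)
    (hinv : ∀ t ≥ (0:ℝ), MapsTo (φ.toFun t) A A) {ε : ℝ} (hε : 0 < ε)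
    (hN : thickening ε A ⊆ N) :
    ∃ δ > 0, ∀ t ≥ (0:ℝ), MapsTo (φ.toFun t) (thickening δ A) (thickening ε A) := by
  obtain ⟨T, hT⟩ := h ε hε
  obtain ⟨δ, hδ, hfin⟩ := φ.exists_mapsTo_thickening_of_mapsTo hA hinv isOpen_thickening
    (self_subset_thickening hε A) T
  refine ⟨δ, hδ, fun t ht x hx => ?_⟩
  by_contra hout
  -- `s` is the first time the orbit of `x` leaves `thickening ε A`.
  set E := Ici 0 ∩ (fun u => φ.toFun u x) ⁻¹' (thickening ε A)ᶜ
  have hEbdd : BddBelow E := ⟨0, fun u hu => hu.1⟩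
  set s := sInf E
  have hsE : s ∈ E := ((φ.continuousOn_orbit x).preimage_isClosed_of_isClosed isClosed_Ici
    isOpen_thickening.isClosed_compl).csInf_mem ⟨t, ht, hout⟩ hEbdd
  have hbefore : ∀ u ∈ Ico 0 s, φ.toFun u x ∈ N := fun u hu =>
    hN (not_not.1 fun h => notMem_of_lt_csInf hu.2 hEbdd ⟨hu.1, h⟩)
  rcases le_or_gt s T with hsT | hTs
  · exact hsE.2 (hfin s ⟨hsE.1, hsT⟩ hx)
  · exact hsE.2 ((mem_thickening_iff_infDist_lt hAne).2 (hT x s hTs hbefore))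

end Semiflow

theorem stmt7_general {X : Type*} [MetricSpace X] (φ : Semiflow X)
    (hac : φ.AsympCompact) (𝒜 : Set X) (h𝒜 : φ.IsAttractor 𝒜)
    (A : Set X) (hA : φ.IsAttractorIn 𝒜 A) :
    φ.IsAttractor A := by
  obtain ⟨h𝒜c, -, U, h𝒜U, h𝒜att⟩ := h𝒜
  obtain ⟨hA𝒜, hAc, hAinv, V, hV, hAV, hAatt⟩ := hA
  refine ⟨hAc, hAinv, ?_⟩
  rcases A.eq_empty_or_nonempty with rfl | hAne
  · exact ⟨univ, empty_subset _, fun ε hε => ⟨1, one_pos, fun _ _ _ _ => by simpa using hε⟩⟩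
  obtain ⟨ε, hε, hεVU⟩ := hAc.exists_cthickening_subset_open (hV.inter isOpen_interior)
    (subset_inter hAV fun a ha => h𝒜U (hA𝒜 ha))
  have hseg : φ.AttractsSegmentsIn A (cthickening ε A) :=
    φ.attractsSegmentsIn_of_attracts hac h𝒜c.isClosed (hAne.mono hA𝒜) h𝒜att hAatt
      hAc.isBounded.cthickening isClosed_cthickening
      (fun z hz => interior_subset (hεVU hz).2) fun z hz => (hεVU hz).1
  have hinv : ∀ t ≥ (0:ℝ), MapsTo (φ.toFun t) A A := fun t ht =>
    mapsTo_iff_image_subset.2 (hAinv t ht).subset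
  obtain ⟨δ, hδ, hstab⟩ := hseg.exists_mapsTo_thickening hAc hAne hinv hε
    (thickening_subset_cthickening ε A)
  refine ⟨thickening δ A,
    (self_subset_thickening hδ A).trans isOpen_thickening.interior_eq.ge, ?_⟩
  exact hseg.attracts fun t ht => (hstab t ht).mono_right (thickening_subset_cthickening ε A)

/-- An attractor of the restricted semiflow on an attractor `𝒜`
is an attractor of the semiflow in the whole space `X`. -/
theorem stmt7 {X : Type*} [MetricSpace X] [CompleteSpace X] (φ : Semiflow X)
    (hac : φ.AsympCompact) (𝒜 : Set X) (h𝒜 : φ.IsAttractor 𝒜)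
    (A : Set X) (hA : φ.IsAttractorIn 𝒜 A) :
    φ.IsAttractor A :=
  stmt7_general φ hac 𝒜 h𝒜 A hA
end
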